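/- A Hausdorff topological space X is k*-metrizable if and only if X has a σ-compact-finite cl₁-osed k-network, i.e. a family 𝒩 of subsets of X which is a countable union of compact-finite subfamilies and such that for every open set U ⊆ X and every compact set K ⊆ U there is a finite subfamily 𝓕 ⊆ 𝒩 with K ⊆ ⋃𝓕 and cl₁(⋃𝓕) ⊆ U. Moreover, if X is sequentially regular, then X is k*-metrizable if and only if X has a σ-compact-finite k-network, i.e. a family 𝒩 of subsets of X which is a countable union of compact-finite subfamilies and such that for every open set U ⊆ X and every compact set K ⊆ U there is a finite subfamily 𝓕 ⊆ 𝒩 with K ⊆ ⋃𝓕 ⊆ U. -/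

import Mathlib

open Filter Topology Set

universe u

/-- A Hausdorff space `X` is k*-metrizable if it is the image of a metrizable space `M`
under a continuous surjection admitting a section which preserves precompact sets. -/
def KStarMetrizable (X : Type u) [TopologicalSpace X] : Prop :=
  ∃ (M : Type u) (_ : MetricSpace M) (f : M → X) (s : X → M),
    Continuous f ∧ Function.Surjective f ∧ (∀ x, f (s x) = x) ∧
    ∀ K : Set X, IsCompact K → IsCompact (closure (s '' K))

/-- A family of sets is compact-finite if every compact set meets only finitely many
members of the family. -/
def CompactFinite {X : Type u} [TopologicalSpace X] (𝓕 : Set (Set X)) : Prop :=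
  ∀ K : Set X, IsCompact K → {N ∈ 𝓕 | (N ∩ K).Nonempty}.Finite

/-- A family is σ-compact-finite if it is a countable union of compact-finite families. -/
def SigmaCompactFinite {X : Type u} [TopologicalSpace X] (𝒩 : Set (Set X)) : Prop :=
  ∃ F : ℕ → Set (Set X), 𝒩 = ⋃ n, F n ∧ ∀ n, CompactFinite (F n)

/-- A space is sequentially regular if each point has arbitrarily small neighborhoods
whose sequential closures stay inside a given neighborhood. -/
def SeqRegular (X : Type u) [TopologicalSpace X] : Prop :=
  ∀ x : X, ∀ U ∈ 𝓝 x, ∃ V ∈ 𝓝 x, seqClosure V ⊆ U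

/-!
For the forward direction, push a σ-locally finite base of `M` forward along `f`: the sets
`f '' (closure V ∩ range s)` form compact-finite families because `s` sends compact sets to
relatively compact ones, and the sequential closure of such a set stays inside `f '' closure V`.

Conversely, with the network written as `⋃ n, F n`, code a point `x` by `n ↦ {N ∈ F n | x ∈ N}`
in the metrizable product `ℕ → Set (Set X)` of discrete spaces. A sequence `A` codes `x` when
the sequential closures of the sets it lists contain `x` and shrink to `x`; `M` is the space of
codes and `f` sends a code to its point. Compact-finiteness keeps the codes of the points of a
compact `K` inside a compact product of finite sets, and a limit of codes of points `xⱼ ∈ K` is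
again a code: `K` has a countable network, hence is first countable and sequentially compact,
and the cl₁-closed k-network property forces all subsequential limits of `(xⱼ)` to coincide.
-/

section Sequences

variable {X : Type*} [TopologicalSpace X]

theorem seqClosure_mono {s t : Set X} (h : s ⊆ t) : seqClosure s ⊆ seqClosure t :=
  fun _ ⟨u, hu, hlim⟩ => ⟨u, fun n => h (hu n), hlim⟩

theorem mem_seqClosure_of_eventually_mem {s : Set X} {u : ℕ → X} {y : X}
    (hu : Tendsto u atTop (𝓝 y)) (hs : ∀ᶠ n in atTop, u n ∈ s) : y ∈ seqClosure s := by
  obtain ⟨n₀, hn₀⟩ := eventually_atTop.1 hs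
  exact ⟨fun n => u (n + n₀), fun n => hn₀ _ (Nat.le_add_left n₀ n),
    hu.comp (tendsto_add_atTop_nat n₀)⟩

theorem seqClosure_biUnion_subset {ι : Type*} {t : Set ι} (ht : t.Finite) (N : ι → Set X) :
    seqClosure (⋃ i ∈ t, N i) ⊆ ⋃ i ∈ t, seqClosure (N i) := by
  rintro y ⟨u, hu, hlim⟩
  have hfreq : ∃ᶠ n in atTop, ∃ i ∈ t, u n ∈ N i :=
    Frequently.of_forall fun n => by simpa only [mem_iUnion, exists_prop] using hu n
  obtain ⟨i, hi, hfreq⟩ := ht.frequently_exists.1 hfreq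
  obtain ⟨φ, hφ, hφN⟩ := extraction_of_frequently_atTop hfreq
  exact mem_iUnion₂.2 ⟨i, hi, fun n => u (φ n), hφN, hlim.comp hφ.tendsto_atTop⟩

theorem seqClosure_sUnion_subset {𝓕 : Set (Set X)} (h𝓕 : 𝓕.Finite) :
    seqClosure (⋃₀ 𝓕) ⊆ ⋃ N ∈ 𝓕, seqClosure N := by
  rw [sUnion_eq_biUnion]
  exact seqClosure_biUnion_subset h𝓕 fun N => N

theorem Filter.Tendsto.exists_isCompact_eventually_mem {u : ℕ → X} {y : X} {U : Set X}
    (hu : Tendsto u atTop (𝓝 y)) (hU : U ∈ 𝓝 y) :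
    ∃ Q ⊆ U, IsCompact Q ∧ ∀ᶠ n in atTop, u n ∈ Q := by
  obtain ⟨n₀, hn₀⟩ := eventually_atTop.1 (hu hU)
  refine ⟨insert y (range fun n => u (n + n₀)), ?_,
    (hu.comp (tendsto_add_atTop_nat n₀)).isCompact_insert_range, ?_⟩
  · rintro _ (rfl | ⟨n, rfl⟩)
    exacts [mem_of_mem_nhds hU, hn₀ _ (Nat.le_add_left n₀ n)]
  · filter_upwards [eventually_ge_atTop n₀] with n hn
    exact mem_insert_of_mem _ ⟨n - n₀, by simp only [Nat.sub_add_cancel hn]⟩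

end Sequences

section Networks

variable {X : Type*} [TopologicalSpace X]

def IsNetwork (𝒩 : Set (Set X)) : Prop :=
  ∀ x U, IsOpen U → x ∈ U → ∃ N ∈ 𝒩, x ∈ N ∧ N ⊆ U

def IsKNetwork (𝒩 : Set (Set X)) : Prop :=
  ∀ U : Set X, IsOpen U → ∀ K : Set X, IsCompact K → K ⊆ U →
    ∃ 𝓕 ⊆ 𝒩, 𝓕.Finite ∧ K ⊆ ⋃₀ 𝓕 ∧ ⋃₀ 𝓕 ⊆ U

def IsSeqClosedKNetwork (𝒩 : Set (Set X)) : Prop :=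
  ∀ U : Set X, IsOpen U → ∀ K : Set X, IsCompact K → K ⊆ U →
    ∃ 𝓕 ⊆ 𝒩, 𝓕.Finite ∧ K ⊆ ⋃₀ 𝓕 ∧ seqClosure (⋃₀ 𝓕) ⊆ U

theorem IsSeqClosedKNetwork.isKNetwork {𝒩 : Set (Set X)} (h : IsSeqClosedKNetwork 𝒩) :
    IsKNetwork 𝒩 := fun U hU K hK hKU =>
  let ⟨𝓕, h𝓕, hfin, hK𝓕, h𝓕U⟩ := h U hU K hK hKU
  ⟨𝓕, h𝓕, hfin, hK𝓕, subset_seqClosure.trans h𝓕U⟩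

theorem IsSeqClosedKNetwork.isNetwork {𝒩 : Set (Set X)} (h : IsSeqClosedKNetwork 𝒩) :
    IsNetwork 𝒩 := by
  intro x U hU hxU
  obtain ⟨𝓕, h𝓕, -, hx𝓕, h𝓕U⟩ := h U hU {x} isCompact_singleton (singleton_subset_iff.2 hxU)
  obtain ⟨N, hN, hxN⟩ := hx𝓕 rfl
  exact ⟨N, h𝓕 hN, hxN, fun y hy => h𝓕U (subset_seqClosure ⟨N, hN, hy⟩)⟩

theorem IsNetwork.isGδ_singleton [RegularSpace X] [T1Space X] {𝒯 : Set (Set X)}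
    (h : IsNetwork 𝒯) (hc : 𝒯.Countable) (x : X) : IsGδ {x} := by
  refine ⟨(fun t => (closure t)ᶜ) '' {t ∈ 𝒯 | x ∉ closure t},
    ?_, (hc.mono fun _ ht => ht.1).image _, ?_⟩
  · rintro _ ⟨t, -, rfl⟩
    exact isClosed_closure.isOpen_compl
  refine Subset.antisymm ?_ fun y hy => ?_
  · rintro _ rfl _ ⟨t, ht, rfl⟩
    exact ht.2
  by_contra hyx
  obtain ⟨C, hC, hCc, hCx⟩ :=
    exists_mem_nhds_isClosed_subset (isOpen_compl_singleton.mem_nhds hyx)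
  obtain ⟨t, ht, hyt, htC⟩ :=
    h y (interior C) isOpen_interior (mem_interior_iff_mem_nhds.2 hC)
  have hcl : closure t ⊆ {x}ᶜ := (closure_minimal (htC.trans interior_subset) hCc).trans hCx
  exact mem_sInter.1 hy _ ⟨t, ⟨ht, fun hx => hcl hx rfl⟩, rfl⟩ (subset_closure hyt)

theorem IsGδ.isCountablyGenerated_nhds [CompactSpace X] [RegularSpace X] {x : X}
    (h : IsGδ {x}) :
    (𝓝 x).IsCountablyGenerated := by
  obtain ⟨T, hTo, hTc, hT⟩ := h
  have hxT : ∀ t ∈ T, x ∈ t := fun t ht => (hT ▸ mem_singleton x : x ∈ ⋂₀ T) t ht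
  choose C hCx hCc hCt using fun t : T => exists_mem_nhds_isClosed_subset
    ((hTo t t.2).mem_nhds (hxT t t.2))
  have : Countable T := hTc.to_subtype
  -- `x` is the only cluster point of the closed neighbourhoods `C t`, so by compactness they
  -- generate `𝓝 x`
  suffices 𝓝 x = ⨅ t, 𝓟 (C t) from this ▸ isCountablyGenerated_seq C
  refine le_antisymm (le_iInf fun t => le_principal_iff.2 (hCx t))
    (le_nhds_of_unique_clusterPt fun y hy => ?_)
  have hyT : y ∈ ⋂₀ T := fun t ht => hCt ⟨t, ht⟩ <| (hCc ⟨t, ht⟩).closure_subset <|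
    hy.mem_closure_of_mem _ (mem_iInf_of_mem (⟨t, ht⟩ : T) (mem_principal_self _))
  rwa [← hT] at hyT

theorem IsNetwork.firstCountableTopology [CompactSpace X] [RegularSpace X] [T1Space X]
    {𝒯 : Set (Set X)}
    (h : IsNetwork 𝒯) (hc : 𝒯.Countable) : FirstCountableTopology X :=
  ⟨fun x => (h.isGδ_singleton hc x).isCountablyGenerated_nhds⟩

theorem IsCompact.isSeqCompact_of_isNetwork [T2Space X] {K : Set X} (hK : IsCompact K)
    {𝒩 : Set (Set X)} (h : IsNetwork 𝒩) (hc : {N ∈ 𝒩 | (N ∩ K).Nonempty}.Countable) :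
    IsSeqCompact K := by
  have : CompactSpace K := isCompact_iff_compactSpace.1 hK
  have hKnet :
      IsNetwork ((Subtype.val ⁻¹' · : Set X → Set K) '' {N ∈ 𝒩 | (N ∩ K).Nonempty}) := by
    intro y W hW hyW
    obtain ⟨U, hU, rfl⟩ := isOpen_induced_iff.1 hW
    obtain ⟨N, hN, hyN, hNU⟩ := h y U hU hyW
    exact ⟨_, ⟨N, ⟨hN, y, hyN, y.2⟩, rfl⟩, hyN, preimage_mono hNU⟩
  have := hKnet.firstCountableTopology (hc.image _)
  simpa using IsInducing.subtypeVal.isSeqCompact_iff.1 (isCompact_univ (X := K)).isSeqCompact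

end Networks

theorem Metric.exists_seq_locallyFinite_closure_base (M : Type*) [MetricSpace M] :
    ∃ v : ℕ → M → Set M, (∀ n p, IsOpen (v n p)) ∧ (∀ n, LocallyFinite (v n)) ∧
      ∀ q W, IsOpen W → q ∈ W → ∃ n p, q ∈ v n p ∧ closure (v n p) ⊆ W := by
  choose v hvo hvu hvlf hvb using fun n : ℕ =>
    precise_refinement (fun p : M => Metric.ball p (1 / (n + 1))) (fun _ => Metric.isOpen_ball)
      (iUnion_eq_univ_iff.2 fun p => ⟨p, Metric.mem_ball_self Nat.one_div_pos_of_nat⟩)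
  refine ⟨v, hvo, hvlf, fun q W hW hq => ?_⟩
  obtain ⟨ε, hε, hball⟩ := Metric.isOpen_iff.1 hW q hq
  obtain ⟨n, hn⟩ := exists_nat_one_div_lt (half_pos hε)
  obtain ⟨p, hp⟩ := iUnion_eq_univ_iff.1 (hvu n) q
  refine ⟨n, p, hp, fun z hz => hball ?_⟩
  have hzp : dist z p ≤ 1 / (n + 1) :=
    (closure_mono (hvb n p)).trans Metric.closure_ball_subset_closedBall hz
  have hqp : dist q p < 1 / (n + 1) := hvb n p hp
  calc dist z q ≤ dist z p + dist q p := dist_triangle_right _ _ _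
    _ < ε := by linarith

section ImagesUnderSection

variable {M : Type*} {X : Type u} [TopologicalSpace M] [TopologicalSpace X]
  {f : M → X} {s : X → M}

theorem compactFinite_range_image_inter_range (hsec : ∀ x, f (s x) = x)
    (hcpt : ∀ K : Set X, IsCompact K → IsCompact (closure (s '' K)))
    {ι : Type*} {w : ι → Set M} (hw : LocallyFinite w) :
    CompactFinite (range fun i => f '' (w i ∩ range s)) := by
  intro K hK
  refine ((hw.finite_nonempty_inter_compact (hcpt K hK)).image
    fun i => f '' (w i ∩ range s)).subset ?_
  rintro _ ⟨⟨i, rfl⟩, _, ⟨_, ⟨hi, y, rfl⟩, rfl⟩, hyK⟩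
  rw [hsec] at hyK
  exact ⟨i, ⟨s y, hi, subset_closure (mem_image_of_mem s hyK)⟩, rfl⟩

theorem seqClosure_image_inter_range_subset [FirstCountableTopology M] [T2Space X]
    (hf : Continuous f) (hsec : ∀ x, f (s x) = x)
    (hcpt : ∀ K : Set X, IsCompact K → IsCompact (closure (s '' K)))
    {C : Set M} (hC : IsClosed C) : seqClosure (f '' (C ∩ range s)) ⊆ f '' C := by
  rintro x ⟨u, hu, hux⟩
  have hsu : ∀ n, s (u n) ∈ C := by
    intro n
    obtain ⟨_, ⟨hm, y, rfl⟩, hy⟩ := hu n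
    rwa [← hy, hsec]
  have hL := (hcpt _ hux.isCompact_insert_range).inter_left hC
  obtain ⟨m, hm, φ, hφ, hlim⟩ := hL.tendsto_subseq fun n =>
    ⟨hsu n, subset_closure (mem_image_of_mem s (mem_insert_of_mem _ (mem_range_self n)))⟩
  refine ⟨m, hm.1, tendsto_nhds_unique ((hf.tendsto m).comp hlim) ?_⟩
  simpa only [Function.comp_def, hsec] using hux.comp hφ.tendsto_atTop

end ImagesUnderSection

theorem KStarMetrizable.exists_seqClosedKNetwork {X : Type u} [TopologicalSpace X] [T2Space X]
    (h : KStarMetrizable X) :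
    ∃ 𝒩 : Set (Set X), SigmaCompactFinite 𝒩 ∧ IsSeqClosedKNetwork 𝒩 := by
  obtain ⟨M, _, f, s, hf, -, hsec, hcpt⟩ := h
  obtain ⟨v, hvo, hvlf, hbase⟩ := Metric.exists_seq_locallyFinite_closure_base M
  set N : ℕ × M → Set X := fun i => f '' (closure (v i.1 i.2) ∩ range s)
  refine ⟨⋃ n, range fun p => N (n, p),
    ⟨_, rfl, fun n => compactFinite_range_image_inter_range hsec hcpt (hvlf n).closure⟩, ?_⟩
  intro U hU K hK hKU
  have hKs : closure (s '' K) ⊆ f ⁻¹' U :=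
    (closure_minimal (image_subset_iff.2 fun x hx => by simpa only [mem_preimage, hsec])
      (hK.isClosed.preimage hf)).trans (preimage_mono hKU)
  obtain ⟨b, hb, hbfin, hcover⟩ := (hcpt K hK).elim_finite_subcover_image
    (b := {i : ℕ × M | closure (v i.1 i.2) ⊆ f ⁻¹' U}) (c := fun i => v i.1 i.2)
    (fun _ _ => hvo _ _) fun q hq => by
      obtain ⟨n, p, hqv, hsub⟩ := hbase q _ (hU.preimage hf) (hKs hq)
      exact mem_iUnion₂.2 ⟨(n, p), hsub, hqv⟩
  refine ⟨N '' b, ?_, hbfin.image N, fun x hx => ?_, ?_⟩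
  · rintro _ ⟨⟨n, p⟩, -, rfl⟩
    exact mem_iUnion.2 ⟨n, p, rfl⟩
  · obtain ⟨i, hib, hi⟩ := mem_iUnion₂.1 (hcover (subset_closure (mem_image_of_mem s hx)))
    exact ⟨N i, mem_image_of_mem N hib, s x, ⟨subset_closure hi, mem_range_self x⟩, hsec x⟩
  · refine (seqClosure_sUnion_subset (hbfin.image N)).trans (iUnion₂_subset ?_)
    rintro _ ⟨i, hib, rfl⟩
    exact (seqClosure_image_inter_range_subset hf hsec hcpt isClosed_closure).trans
      (image_subset_iff.2 (hb hib))

def netCode {X : Type*} (F : ℕ → Set (Set X)) (x : X) (n : ℕ) : Set (Set X) :=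
  {N ∈ F n | x ∈ N}

theorem eventually_mem_of_mem_code {X : Type*} {F A : ℕ → Set (Set X)} {x : ℕ → X}
    (hA : ∀ n, ∀ᶠ j in atTop, netCode F (x j) n = A n) {n : ℕ} {N : Set X} (hN : N ∈ A n) :
    ∀ᶠ j in atTop, x j ∈ N :=
  (hA n).mono fun j hj => (hj ▸ hN : N ∈ netCode F (x j) n).2

section Codes

variable {X : Type u} [TopologicalSpace X] {F : ℕ → Set (Set X)}

theorem countable_setOf_inter_nonempty_of_compactFinite (hF : ∀ n, CompactFinite (F n))
    {K : Set X} (hK : IsCompact K) :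
    {N ∈ ⋃ n, F n | (N ∩ K).Nonempty}.Countable := by
  refine (countable_iUnion fun n => (hF n K hK).countable).mono ?_
  rintro N ⟨hN, hNK⟩
  obtain ⟨n, hn⟩ := mem_iUnion.1 hN
  exact mem_iUnion.2 ⟨n, hn, hNK⟩

def IsCodeOf (A : ℕ → Set (Set X)) (x : X) : Prop :=
  (∀ n, ∀ N ∈ A n, x ∈ seqClosure N) ∧
    ∀ U, IsOpen U → x ∈ U → ∃ n, ∃ N ∈ A n, seqClosure N ⊆ U

theorem IsCodeOf.eq [T1Space X] {A : ℕ → Set (Set X)} {x y : X} (hx : IsCodeOf A x)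
    (hy : IsCodeOf A y) : x = y := by
  by_contra hne
  obtain ⟨n, N, hN, hNy⟩ := hx.2 {y}ᶜ isOpen_compl_singleton hne
  exact hNy (hy.1 n N hN) rfl

theorem isCodeOf_netCode (hnet : IsSeqClosedKNetwork (⋃ n, F n)) (x : X) :
    IsCodeOf (netCode F x) x := by
  refine ⟨fun n N hN => subset_seqClosure hN.2, fun U hU hxU => ?_⟩
  obtain ⟨𝓕, h𝓕, -, hx𝓕, h𝓕U⟩ :=
    hnet U hU {x} isCompact_singleton (singleton_subset_iff.2 hxU)
  obtain ⟨N, hN, hxN⟩ := hx𝓕 rfl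
  obtain ⟨n, hn⟩ := mem_iUnion.1 (h𝓕 hN)
  exact ⟨n, N, ⟨hn, hxN⟩, (seqClosure_mono (subset_sUnion_of_mem hN)).trans h𝓕U⟩

section Limits

variable {A : ℕ → Set (Set X)} {x : ℕ → X}

theorem exists_mem_code_seqClosure_subset (hA : ∀ n, ∀ᶠ j in atTop, netCode F (x j) n = A n)
    (hnet : IsSeqClosedKNetwork (⋃ n, F n))
    {Q U : Set X} (hQ : IsCompact Q) (hU : IsOpen U) (hQU : Q ⊆ U)
    (hxQ : ∃ᶠ j in atTop, x j ∈ Q) :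
    ∃ n, ∃ N ∈ A n, seqClosure N ⊆ U ∧ ∀ᶠ j in atTop, x j ∈ N := by
  obtain ⟨𝓕, h𝓕, hfin, hQ𝓕, h𝓕U⟩ := hnet U hU Q hQ hQU
  obtain ⟨N, hN, hfreq⟩ := hfin.frequently_exists.1 (hxQ.mono fun j hj => hQ𝓕 hj)
  obtain ⟨n, hn⟩ := mem_iUnion.1 (h𝓕 hN)
  obtain ⟨j, hxN, hj⟩ := (hfreq.and_eventually (hA n)).exists
  have hNA : N ∈ A n := hj ▸ ⟨hn, hxN⟩
  exact ⟨n, N, hNA, (seqClosure_mono (subset_sUnion_of_mem hN)).trans h𝓕U,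
    eventually_mem_of_mem_code hA hNA⟩

theorem eq_of_tendsto_comp_of_code [T1Space X]
    (hA : ∀ n, ∀ᶠ j in atTop, netCode F (x j) n = A n)
    (hnet : IsSeqClosedKNetwork (⋃ n, F n))
    {φ ψ : ℕ → ℕ} (hφ : Tendsto φ atTop atTop) (hψ : Tendsto ψ atTop atTop) {y z : X}
    (hy : Tendsto (x ∘ φ) atTop (𝓝 y)) (hz : Tendsto (x ∘ ψ) atTop (𝓝 z)) : y = z := by
  by_contra hne
  obtain ⟨Q, hQz, hQ, hxQ⟩ :=
    hy.exists_isCompact_eventually_mem (isOpen_compl_singleton.mem_nhds hne)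
  obtain ⟨n, N, -, hNz, hxN⟩ := exists_mem_code_seqClosure_subset hA hnet hQ
    isOpen_compl_singleton hQz (hφ.frequently hxQ.frequently)
  exact hNz (mem_seqClosure_of_eventually_mem hz (hψ.eventually hxN)) rfl

theorem exists_tendsto_of_code [T2Space X] (hA : ∀ n, ∀ᶠ j in atTop, netCode F (x j) n = A n)
    (hF : ∀ n, CompactFinite (F n)) (hnet : IsSeqClosedKNetwork (⋃ n, F n))
    {K : Set X} (hK : IsCompact K) (hxK : ∀ j, x j ∈ K) : ∃ y, Tendsto x atTop (𝓝 y) := by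
  have hKseq := hK.isSeqCompact_of_isNetwork hnet.isNetwork
    (countable_setOf_inter_nonempty_of_compactFinite hF hK)
  obtain ⟨y, -, φ, hφ, hy⟩ := hKseq hxK
  refine ⟨y, tendsto_of_subseq_tendsto fun ns hns => ?_⟩
  obtain ⟨z, -, ψ, hψ, hz⟩ := hKseq fun j => hxK (ns j)
  refine ⟨ψ, ?_⟩
  rwa [eq_of_tendsto_comp_of_code hA hnet hφ.tendsto_atTop (hns.comp hψ.tendsto_atTop) hy hz]

theorem isCodeOf_of_tendsto (hA : ∀ n, ∀ᶠ j in atTop, netCode F (x j) n = A n)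
    (hnet : IsSeqClosedKNetwork (⋃ n, F n)) {y : X}
    (hy : Tendsto x atTop (𝓝 y)) : IsCodeOf A y := by
  refine ⟨fun n N hN => mem_seqClosure_of_eventually_mem hy (eventually_mem_of_mem_code hA hN),
    fun U hU hyU => ?_⟩
  obtain ⟨Q, hQU, hQ, hxQ⟩ := hy.exists_isCompact_eventually_mem (hU.mem_nhds hyU)
  obtain ⟨n, N, hN, hNU, -⟩ :=
    exists_mem_code_seqClosure_subset hA hnet hQ hU hQU hxQ.frequently
  exact ⟨n, N, hN, hNU⟩

end Limits

end Codes

section CodeSpace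

variable {X : Type u} [TopologicalSpace X] {F : ℕ → Set (Set X)}

local instance : TopologicalSpace (Set (Set X)) := ⊥

local instance : DiscreteTopology (Set (Set X)) := ⟨rfl⟩

theorem isCompact_closure_image_netCode (hF : ∀ n, CompactFinite (F n)) {K : Set X}
    (hK : IsCompact K) : IsCompact (closure (netCode F '' K)) := by
  have hfin : ∀ n, (𝒫 {N ∈ F n | (N ∩ K).Nonempty}).Finite := fun n => (hF n K hK).powerset
  have hsub : netCode F '' K ⊆ univ.pi fun n => 𝒫 {N ∈ F n | (N ∩ K).Nonempty} := by
    rintro _ ⟨x, hx, rfl⟩ n - N hN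
    exact ⟨hN.1, x, hN.2, hx⟩
  exact (isCompact_univ_pi fun n => (hfin n).isCompact).of_isClosed_subset isClosed_closure
    (closure_minimal hsub (isClosed_set_pi fun n _ => (hfin n).isClosed))

theorem exists_isCodeOf_of_mem_closure [T2Space X] (hF : ∀ n, CompactFinite (F n))
    (hnet : IsSeqClosedKNetwork (⋃ n, F n)) {K : Set X} (hK : IsCompact K)
    {A : ℕ → Set (Set X)} (hA : A ∈ closure (netCode F '' K)) : ∃ y, IsCodeOf A y := by
  obtain ⟨c, hcK, hc⟩ := mem_closure_iff_seq_limit.1 hA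
  choose x hxK hxc using hcK
  have hxA : ∀ n, ∀ᶠ j in atTop, netCode F (x j) n = A n := fun n => by
    simpa only [hxc, nhds_discrete, tendsto_pure] using tendsto_pi_nhds.1 hc n
  obtain ⟨y, hy⟩ := exists_tendsto_of_code hxA hF hnet hK hxK
  exact ⟨y, isCodeOf_of_tendsto hxA hnet hy⟩

theorem kStarMetrizable_of_seqClosedKNetwork [T2Space X] {𝒩 : Set (Set X)}
    (h𝒩 : SigmaCompactFinite 𝒩) (hnet : IsSeqClosedKNetwork 𝒩) : KStarMetrizable X := by
  obtain ⟨F, rfl, hF⟩ := h𝒩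
  let _ : MetricSpace (ℕ → Set (Set X)) := PiNat.metricSpace
  let M := {A : ℕ → Set (Set X) // ∃ x, IsCodeOf A x}
  let f : M → X := fun A => A.2.choose
  have hf : ∀ A : M, IsCodeOf A.1 (f A) := fun A => A.2.choose_spec
  let s : X → M := fun x => ⟨netCode F x, x, isCodeOf_netCode hnet x⟩
  have hsec : ∀ x, f (s x) = x := fun x => (hf (s x)).eq (isCodeOf_netCode hnet x)
  refine ⟨M, inferInstance, f, s, continuous_iff_continuousAt.2 fun A => ?_,
    fun x => ⟨s x, hsec x⟩, hsec, fun K hK => ?_⟩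
  · refine (nhds_basis_opens (f A)).tendsto_right_iff.2 fun U ⟨hAU, hU⟩ => ?_
    obtain ⟨n, N, hN, hNU⟩ := (hf A).2 U hU hAU
    have hnA : {B : M | B.1 n = A.1 n} ∈ 𝓝 A :=
      ((continuous_apply n).comp continuous_subtype_val).continuousAt.preimage_mem_nhds
        ((isOpen_discrete {A.1 n}).mem_nhds rfl)
    filter_upwards [hnA] with B hB
    exact hNU ((hf B).1 n N (hB ▸ hN))
  · have hcodes : closure (netCode F '' K) ⊆ range (Subtype.val : M → _) := fun A hA => by
      simpa using exists_isCodeOf_of_mem_closure hF hnet hK hA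
    have himage : Subtype.val '' closure (s '' K) = closure (netCode F '' K) := by
      rw [IsEmbedding.subtypeVal.closure_eq_preimage_closure_image, ← image_comp]
      exact image_preimage_eq_of_subset hcodes
    rw [IsEmbedding.subtypeVal.isCompact_iff, himage]
    exact isCompact_closure_image_netCode hF hK

end CodeSpace

theorem SeqRegular.exists_isOpen_superset_seqClosure_subset {X : Type u} [TopologicalSpace X]
    (hreg : SeqRegular X) {K U : Set X} (hK : IsCompact K) (hU : IsOpen U) (hKU : K ⊆ U) :
    ∃ W, IsOpen W ∧ K ⊆ W ∧ seqClosure W ⊆ U := by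
  choose! V hV hVU using fun x (hx : x ∈ K) => hreg x U (hU.mem_nhds (hKU hx))
  obtain ⟨t, htK, hKt⟩ := hK.elim_nhds_subcover (fun x => interior (V x))
    fun x hx => interior_mem_nhds.2 (hV x hx)
  refine ⟨⋃ x ∈ t, interior (V x), isOpen_biUnion fun _ _ => isOpen_interior, hKt, ?_⟩
  refine (seqClosure_biUnion_subset t.finite_toSet _).trans (iUnion₂_subset fun x hx => ?_)
  exact (seqClosure_mono interior_subset).trans (hVU x (htK x hx))

theorem IsKNetwork.isSeqClosedKNetwork {X : Type u} [TopologicalSpace X] (hreg : SeqRegular X)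
    {𝒩 : Set (Set X)} (h : IsKNetwork 𝒩) : IsSeqClosedKNetwork 𝒩 := by
  intro U hU K hK hKU
  obtain ⟨W, hW, hKW, hWU⟩ := hreg.exists_isOpen_superset_seqClosure_subset hK hU hKU
  obtain ⟨𝓕, h𝓕, hfin, hK𝓕, h𝓕W⟩ := h W hW K hK hKW
  exact ⟨𝓕, h𝓕, hfin, hK𝓕, (seqClosure_mono h𝓕W).trans hWU⟩

/-- A Hausdorff space `X` is k*-metrizable iff it has a σ-compact-finite
cl₁-osed k-network; if moreover `X` is sequentially regular then `X` is k*-metrizable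
iff it has a σ-compact-finite k-network. -/
theorem stmt_9 (X : Type u) [TopologicalSpace X] [T2Space X] :
    (KStarMetrizable X ↔
      ∃ 𝒩 : Set (Set X), SigmaCompactFinite 𝒩 ∧
        ∀ U : Set X, IsOpen U → ∀ K : Set X, IsCompact K → K ⊆ U →
          ∃ 𝓕 ⊆ 𝒩, 𝓕.Finite ∧ K ⊆ ⋃₀ 𝓕 ∧ seqClosure (⋃₀ 𝓕) ⊆ U) ∧
    (SeqRegular X →
      (KStarMetrizable X ↔
        ∃ 𝒩 : Set (Set X), SigmaCompactFinite 𝒩 ∧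
          ∀ U : Set X, IsOpen U → ∀ K : Set X, IsCompact K → K ⊆ U →
            ∃ 𝓕 ⊆ 𝒩, 𝓕.Finite ∧ K ⊆ ⋃₀ 𝓕 ∧ ⋃₀ 𝓕 ⊆ U)) := by
  have hmetr :
      KStarMetrizable X ↔ ∃ 𝒩 : Set (Set X), SigmaCompactFinite 𝒩 ∧ IsSeqClosedKNetwork 𝒩 :=
    ⟨KStarMetrizable.exists_seqClosedKNetwork,
      fun ⟨_, h𝒩, hnet⟩ => kStarMetrizable_of_seqClosedKNetwork h𝒩 hnet⟩
  refine ⟨hmetr, fun hreg => hmetr.trans (exists_congr fun 𝒩 => and_congr_right fun _ => ?_)⟩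
  exact ⟨IsSeqClosedKNetwork.isKNetwork, IsKNetwork.isSeqClosedKNetwork hreg⟩
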